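/- arXiv:1512.08414 — 3 statements merged into one kernel-verified Lean document; each statement's English description precedes it below -/
import Mathlib

section
/- For every integer n ≥ 1, the polynomial Δ_n(t) = t^4 + n·t^3 − (2n+1)·t^2 + n·t + 1 is irreducible over ℚ. -/
/-! By Gauss's lemma it suffices to show that the monic integer polynomial `Δ_n` is irreducible
over `ℤ`. An integer root would divide the constant term `1`, but `Δ_n(1) = 1` and
`Δ_n(-1) = 1 - 4n`. In a factorisation `(X² + aX + b)(X² + cX + d)` we have `bd = 1`:
`b = d = -1` forces `a + c = n = -(a + c)`, while `b = d = 1` gives `a + c = n`,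
`ac = -(2n + 3)`, so `(a - c)² = (n + 2)(n + 6)` lies strictly between `(n + 3)²` and
`(n + 4)²`. -/

open Polynomial

namespace Polynomial

variable {R : Type*}

theorem Monic.eq_X_sq_add_C_mul_X_add_C [Semiring R] {p : R[X]} (hp : p.Monic)
    (hdeg : p.natDegree = 2) : p = X ^ 2 + C (p.coeff 1) * X + C (p.coeff 0) := by
  have hlead : p.coeff 2 = 1 := hdeg ▸ hp.coeff_natDegree
  have hquad := eq_quadratic_of_degree_le_two (degree_le_of_natDegree_le hdeg.le)
  rwa [hlead, C_1, one_mul] at hquad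

theorem coeff_quadratic_mul_quadratic [CommRing R] (a b c d : R) :
    let q := (X ^ 2 + C a * X + C b) * (X ^ 2 + C c * X + C d)
    q.coeff 3 = a + c ∧ q.coeff 2 = b + d + a * c ∧ q.coeff 1 = a * d + b * c ∧
      q.coeff 0 = b * d := by
  have hexpand : (X ^ 2 + C a * X + C b) * (X ^ 2 + C c * X + C d) =
      X ^ 4 + C (a + c) * X ^ 3 + C (b + d + a * c) * X ^ 2 + C (a * d + b * c) * X +
        C (b * d) := by
    simp only [C_add, C_mul]
    ring
  simp only [hexpand, coeff_add, coeff_C_mul, coeff_X_pow, coeff_X, coeff_C]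
  norm_num

theorem Monic.irreducible_of_natDegree_eq_four [CommRing R] [NoZeroDivisors R] {p : R[X]}
    (hp : p.Monic) (hdeg : p.natDegree = 4) (hroot : ∀ x, ¬p.IsRoot x)
    (hquad : ∀ a b c d : R, a + c = p.coeff 3 → b + d + a * c = p.coeff 2 →
      a * d + b * c = p.coeff 1 → b * d = p.coeff 0 → False) :
    Irreducible p := by
  cases subsingleton_or_nontrivial R
  · simp [natDegree_of_subsingleton] at hdeg
  rw [hp.irreducible_iff_natDegree', hdeg]
  refine ⟨fun h => by simp [h] at hdeg, fun f g hf hg hfg hg_deg => ?_⟩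
  rw [Finset.mem_Ioc] at hg_deg
  obtain hg1 | hg2 : g.natDegree = 1 ∨ g.natDegree = 2 := by omega
  · apply hroot (-g.coeff 0)
    rw [← hfg, hg.eq_X_add_C hg1]
    simp
  · have hf2 : f.natDegree = 2 := by
      have := hf.natDegree_mul hg
      rw [hfg] at this
      omega
    rw [hf.eq_X_sq_add_C_mul_X_add_C hf2, hg.eq_X_sq_add_C_mul_X_add_C hg2] at hfg
    obtain ⟨h3, h2, h1, h0⟩ :=
      coeff_quadratic_mul_quadratic (f.coeff 1) (f.coeff 0) (g.coeff 1) (g.coeff 0)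
    rw [hfg] at h3 h2 h1 h0
    exact hquad _ _ _ _ h3.symm h2.symm h1.symm h0.symm

end Polynomial

theorem Int.not_exists_sq' {k n : ℤ} (h₁ : k ^ 2 < n) (h₂ : n < (k + 1) ^ 2) :
    ¬∃ m, m ^ 2 = n := by
  rintro ⟨m, rfl⟩
  rw [sq_lt_sq] at h₁ h₂
  have := abs_add_le k 1
  rw [abs_one] at this
  omega

noncomputable def delta (R : Type*) [Ring R] (n : ℤ) : R[X] :=
  X ^ 4 + C (n : R) * X ^ 3 - C (2 * (n : R) + 1) * X ^ 2 + C (n : R) * X + 1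

section Delta

variable (R : Type*) [Ring R] (n : ℤ)

theorem delta_monic [Nontrivial R] : (delta R n).Monic := by
  unfold delta
  monicity!

theorem natDegree_delta [Nontrivial R] : (delta R n).natDegree = 4 := by
  unfold delta
  compute_degree!

theorem coeff_delta : (delta R n).coeff 3 = n ∧ (delta R n).coeff 2 = -(2 * n + 1) ∧
    (delta R n).coeff 1 = n ∧ (delta R n).coeff 0 = 1 := by
  simp only [delta, coeff_add, coeff_sub, coeff_C_mul, coeff_X_pow, coeff_X, coeff_one]
  norm_num

theorem eval_delta (x : R) :
    (delta R n).eval x = x ^ 4 + n * x ^ 3 - (2 * n + 1) * x ^ 2 + n * x + 1 := by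
  simp only [delta, eval_add, eval_sub, eval_C_mul, eval_X_pow, eval_X, eval_one]

theorem map_delta {S : Type*} [Ring S] (f : R →+* S) : (delta R n).map f = delta S n := by
  simp only [delta, Polynomial.map_add, Polynomial.map_sub, Polynomial.map_mul, Polynomial.map_pow,
    Polynomial.map_X, Polynomial.map_C, Polynomial.map_one]
  simp only [map_add, map_mul, map_intCast, map_ofNat, map_one]

end Delta

theorem delta_not_isRoot {n : ℤ} (hn : 1 ≤ n) (x : ℤ) : ¬(delta ℤ n).IsRoot x := by
  intro hx
  rw [IsRoot, eval_delta] at hx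
  have hunit : x * (x ^ 3 + n * x ^ 2 - (2 * n + 1) * x + n) = -1 := by linear_combination hx
  rcases Int.eq_one_or_neg_one_of_mul_eq_neg_one hunit with rfl | rfl <;> linarith

theorem delta_coeff_system_unsolvable {n : ℤ} (hn : 1 ≤ n) (a b c d : ℤ) (h3 : a + c = n)
    (h2 : b + d + a * c = -(2 * n + 1)) (h1 : a * d + b * c = n) (h0 : b * d = 1) : False := by
  rcases Int.eq_one_or_neg_one_of_mul_eq_one' h0 with ⟨rfl, rfl⟩ | ⟨rfl, rfl⟩
  · have hdisc : (a - c) ^ 2 = (n + 2) * (n + 6) := by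
      linear_combination (a + c + n) * h3 - 4 * h2
    exact Int.not_exists_sq' (k := n + 3) (by nlinarith) (by nlinarith) ⟨a - c, hdisc⟩
  · linarith

theorem irreducible_delta_int {n : ℤ} (hn : 1 ≤ n) : Irreducible (delta ℤ n) := by
  obtain ⟨c3, c2, c1, c0⟩ := coeff_delta ℤ n
  refine (delta_monic ℤ n).irreducible_of_natDegree_eq_four (natDegree_delta ℤ n)
    (delta_not_isRoot hn) fun a b c d h3 h2 h1 h0 => ?_
  simp only [c3, c2, c1, c0, Int.cast_id] at h3 h2 h1 h0
  exact delta_coeff_system_unsolvable hn a b c d h3 h2 h1 h0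

theorem delta_irreducible (n : ℤ) (hn : 1 ≤ n) :
    Irreducible ((X ^ 4 + C (n : ℚ) * X ^ 3 - C (2 * (n : ℚ) + 1) * X ^ 2
      + C (n : ℚ) * X + 1 : Polynomial ℚ)) := by
  have hirr := (delta_monic ℤ n).irreducible_iff_irreducible_map_fraction_map (K := ℚ)
    |>.mp (irreducible_delta_int hn)
  rwa [map_delta] at hirr
end

section
/- For every integer n ≥ 1, the polynomial Δ_n(t) = t^4 + n t^3 − (2n+1) t^2 + n t + 1 has exactly one complex root with positive imaginary part, and that root lies on the unit circle. -/
/-!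
Δ is palindromic, so it factors as `(t² - s t + 1)(t² - s' t + 1)` with `s + s' = -n` and
`s s' = -(2n + 3)`. The quadratic `u² + n u - (2n + 3)` takes the value `1` at `u = 2` and
`1 - 4n < 0` at `u = -2`, so `|s| < 2 < |s'|`. A factor `t² - s t + 1` with real `s` has its
roots on the unit circle, conjugate to each other, when `|s| < 2`, and real roots when `|s| ≥ 2`.
-/

open Complex

/-- The root of `z² - s z + 1` in the closed upper half-plane, for `s² ≤ 4`. -/
noncomputable def unitCircleRoot (s : ℝ) : ℂ :=
  ⟨s / 2, √(4 - s ^ 2) / 2⟩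

section

variable {s : ℝ} {z : ℂ}

theorem re_eq_and_im_sq_eq_of_sq_sub_mul_add_eq_zero {c : ℝ} (hz : z ^ 2 - s * z + c = 0)
    (him : z.im ≠ 0) : z.re = s / 2 ∧ z.im ^ 2 = c - s ^ 2 / 4 := by
  have hre := congrArg Complex.re hz
  have him' := congrArg Complex.im hz
  simp only [sub_re, add_re, sub_im, add_im, pow_two, mul_re, mul_im, ofReal_re, ofReal_im,
    zero_re, zero_im] at hre him'
  have hx : z.re = s / 2 := by
    have : z.im * (2 * z.re - s) = 0 := by linear_combination him'
    linarith [(mul_eq_zero.mp this).resolve_left him]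
  refine ⟨hx, ?_⟩
  rw [hx] at hre
  linear_combination -hre

theorem eq_unitCircleRoot (hz : z ^ 2 - s * z + 1 = 0) (him : 0 < z.im) :
    z = unitCircleRoot s := by
  obtain ⟨hx, hy⟩ := re_eq_and_im_sq_eq_of_sq_sub_mul_add_eq_zero (c := 1) (by simpa using hz)
    him.ne'
  refine Complex.ext hx ?_
  show z.im = √(4 - s ^ 2) / 2
  rw [eq_div_iff two_ne_zero, ← Real.sqrt_sq (by positivity : 0 ≤ z.im * 2)]
  congr 1
  linear_combination 4 * hy

theorem im_nonpos_of_sq_sub_mul_add_one_eq_zero (hs : 4 ≤ s ^ 2)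
    (hz : z ^ 2 - s * z + 1 = 0) : z.im ≤ 0 := by
  by_contra! him
  obtain ⟨-, hy⟩ := re_eq_and_im_sq_eq_of_sq_sub_mul_add_eq_zero (c := 1) (by simpa using hz)
    him.ne'
  nlinarith

theorem unitCircleRoot_sq_sub_mul_add_one (hs : s ^ 2 ≤ 4) :
    unitCircleRoot s ^ 2 - s * unitCircleRoot s + 1 = 0 := by
  have he := Real.sq_sqrt (sub_nonneg.mpr hs)
  unfold unitCircleRoot
  set e := √(4 - s ^ 2)
  apply Complex.ext <;>
    simp only [sub_re, add_re, sub_im, add_im, pow_two, mul_re, mul_im, ofReal_re,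
      ofReal_im, one_re, one_im, zero_re, zero_im]
  · linear_combination -he / 4
  · ring

theorem norm_unitCircleRoot (hs : s ^ 2 ≤ 4) : ‖unitCircleRoot s‖ = 1 := by
  have he := Real.sq_sqrt (sub_nonneg.mpr hs)
  rw [Complex.norm_def, unitCircleRoot, Complex.normSq_mk, Real.sqrt_eq_one]
  linear_combination he / 4

theorem unitCircleRoot_im_pos (hs : s ^ 2 < 4) : 0 < (unitCircleRoot s).im :=
  half_pos (Real.sqrt_pos.mpr (sub_pos.mpr hs))

end

theorem palindromic_quartic_eq_mul {R : Type*} [CommRing R] {a s s' z : R} (hsum : s + s' = -a)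
    (hprod : s * s' = -(2 * a + 3)) :
    z ^ 4 + a * z ^ 3 - (2 * a + 1) * z ^ 2 + a * z + 1 =
      (z ^ 2 - s * z + 1) * (z ^ 2 - s' * z + 1) := by
  linear_combination (z ^ 3 + z) * hsum - z ^ 2 * hprod

theorem exists_root_sq_lt_four_of_quarter_lt {a : ℝ} (ha : 1 / 4 < a) :
    ∃ s : ℝ, s ^ 2 + a * s - (2 * a + 3) = 0 ∧ s ^ 2 < 4 ∧ 4 < (-a - s) ^ 2 := by
  set d := √(a ^ 2 + 8 * a + 12)
  have hd : d ^ 2 = a ^ 2 + 8 * a + 12 := Real.sq_sqrt (by nlinarith)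
  have hd_nonneg : 0 ≤ d := Real.sqrt_nonneg _
  have hd_lt : d < a + 4 := by nlinarith
  obtain ⟨hd_gt, hd_gt'⟩ := abs_lt_of_sq_lt_sq' (a := a - 4) (by nlinarith) hd_nonneg
  exact ⟨(-a + d) / 2, by linear_combination hd / 4, by nlinarith, by nlinarith⟩

theorem delta_unique_root_upper_half_on_circle (n : ℤ) (hn : 1 ≤ n) :
    ∃ ω : ℂ,
      (ω ^ 4 + (n : ℂ) * ω ^ 3 - (2 * (n : ℂ) + 1) * ω ^ 2 + (n : ℂ) * ω + 1 = 0 ∧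
        0 < ω.im ∧ ‖ω‖ = 1) ∧
      ∀ z : ℂ,
        (z ^ 4 + (n : ℂ) * z ^ 3 - (2 * (n : ℂ) + 1) * z ^ 2 + (n : ℂ) * z + 1 = 0 ∧
          0 < z.im) → z = ω := by
  have hn' : (1 / 4 : ℝ) < n := by
    have : (1 : ℝ) ≤ n := by exact_mod_cast hn
    linarith
  obtain ⟨s, hs, hs_in, hs'_out⟩ := exists_root_sq_lt_four_of_quarter_lt hn'
  have hsC : (s : ℂ) ^ 2 + n * s - (2 * n + 3) = 0 := by exact_mod_cast congrArg ofReal hs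
  have hfactor (z : ℂ) := palindromic_quartic_eq_mul (z := z) (a := (n : ℂ)) (s := (s : ℂ))
    (s' := -n - s) (by ring) (by linear_combination -hsC)
  refine ⟨unitCircleRoot s, ⟨?_, unitCircleRoot_im_pos hs_in, norm_unitCircleRoot hs_in.le⟩, ?_⟩
  · rw [hfactor, unitCircleRoot_sq_sub_mul_add_one hs_in.le, zero_mul]
  rintro z ⟨hz, him⟩
  rcases mul_eq_zero.mp ((hfactor z).symm.trans hz) with h | h
  · exact eq_unitCircleRoot h him
  · have := im_nonpos_of_sq_sub_mul_add_one_eq_zero (s := -n - s) hs'_out.le (by simpa using h)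
    exact (this.not_gt him).elim
end

section
/- Let G be an abelian group, A ≤ G a subgroup, g : G → ℝ subadditive, symmetric, with g(0)=0. Suppose for each n ≥ 1 there are homomorphisms ψ_n : G → ℝ vanishing on A with |ψ_n(x)| ≤ 2 g(x) for all x, and elements y_n ∈ G with ψ_n(y_n) ≥ 2N and ψ_n(y_m) = 0 for m < n, where N is a fixed positive integer. Then for every nonzero ℤ-linear combination x = Σ a_n y_n (finitely many a_n ≠ 0) and every a ∈ A, g(x − a) ≥ N. -/
/-!
Let `n` be the largest index with `f n ≠ 0` and `x = ∑ f m • y m`. Since `ψ n` kills every `y m`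
with `m < n` and all of `A`, it sends `x - a` to `f n • ψ n (y n)`, whose absolute value is at
least `2N`; the bound `|ψ n| ≤ 2 g` then gives `g (x - a) ≥ N`.
-/

theorem AddMonoidHom.map_finsupp_sum_zsmul_of_vanish_below {G M : Type*} [AddCommGroup G]
    [AddCommGroup M] (ψ : G →+ M) (y : ℕ → G) {n : ℕ} (hψ : ∀ m < n, ψ (y m) = 0)
    (f : ℕ →₀ ℤ) (hf : ∀ m ∈ f.support, m ≤ n) :
    ψ (f.sum fun m c => c • y m) = f n • ψ (y n) := by
  rw [map_finsuppSum, Finsupp.sum_eq_single n]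
  · exact map_zsmul ψ (f n) (y n)
  · intro m hm hmn
    rw [map_zsmul, hψ m (lt_of_le_of_ne (hf m (Finsupp.mem_support_iff.2 hm)) hmn), smul_zero]
  · intro _
    rw [zero_smul, map_zero]

theorem le_abs_zsmul_of_ne_zero {M : Type*} [AddCommGroup M] [LinearOrder M]
    [IsOrderedAddMonoid M] {k : ℤ} (hk : k ≠ 0) {r : M} (hr : 0 ≤ r) : r ≤ |k • r| := by
  rw [abs_zsmul, abs_of_nonneg hr]
  simpa using zsmul_le_zsmul_left hr (Int.one_le_abs hk)

theorem genus_bound_on_span_general {G : Type*} [AddCommGroup G]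
    (A : AddSubgroup G) (g : G → ℝ)
    (N : ℕ)
    (ψ : ℕ → G →+ ℝ) (y : ℕ → G)
    (hA : ∀ n, ∀ a ∈ A, ψ n a = 0)
    (hbound : ∀ n, ∀ x : G, |ψ n x| ≤ 2 * g x)
    (hdiag : ∀ n, (2 * N : ℝ) ≤ ψ n (y n))
    (htri : ∀ m n : ℕ, m < n → ψ n (y m) = 0) :
    ∀ f : ℕ →₀ ℤ, f ≠ 0 → ∀ a ∈ A,
      (N : ℝ) ≤ g ((f.sum fun n c => c • y n) - a) := by
  intro f hf a ha
  have hsupp : f.support.Nonempty := Finsupp.support_nonempty_iff.2 hf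
  set n := f.support.max' hsupp
  have hfn : f n ≠ 0 := Finsupp.mem_support_iff.1 (f.support.max'_mem hsupp)
  set x := f.sum fun m c => c • y m
  have hψ : ψ n (x - a) = f n • ψ n (y n) := by
    rw [map_sub, hA n a ha, sub_zero]
    exact (ψ n).map_finsupp_sum_zsmul_of_vanish_below y (fun m hm => htri m n hm) f
      (fun m hm => f.support.le_max' m hm)
  have hdiag_pos : (0 : ℝ) ≤ ψ n (y n) := le_trans (by positivity) (hdiag n)
  have hlower : (2 * N : ℝ) ≤ |ψ n (x - a)| :=
    hψ ▸ (hdiag n).trans (le_abs_zsmul_of_ne_zero hfn hdiag_pos)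
  linarith [hbound n (x - a)]

theorem genus_bound_on_span {G : Type*} [AddCommGroup G]
    (A : AddSubgroup G) (g : G → ℝ)
    (hsub : ∀ x y : G, g (x + y) ≤ g x + g y)
    (h0 : g 0 = 0) (hsymm : ∀ x : G, g (-x) = g x)
    (N : ℕ) (hN : 0 < N)
    (ψ : ℕ → G →+ ℝ) (y : ℕ → G)
    (hA : ∀ n, ∀ a ∈ A, ψ n a = 0)
    (hbound : ∀ n, ∀ x : G, |ψ n x| ≤ 2 * g x)
    (hdiag : ∀ n, (2 * N : ℝ) ≤ ψ n (y n))
    (htri : ∀ m n : ℕ, m < n → ψ n (y m) = 0) :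
    ∀ f : ℕ →₀ ℤ, f ≠ 0 → ∀ a ∈ A,
      (N : ℝ) ≤ g ((f.sum fun n c => c • y n) - a) :=
  genus_bound_on_span_general A g N ψ y hA hbound hdiag htri
end
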